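/- arXiv:2012.05969 — 3 statements merged into one kernel-verified Lean document; each statement's English description precedes it below -/
import Mathlib

section
/- Let n1, n2 ≥ 2 and n3 ≥ 4 be integers. Then for all integers x1, x2, x3, x4, not all zero, the value 3x1² + 2n1·x2² + 2n2·x3² + (2n3+1)x4² + 2x1x4 is at least 3. Equivalently, 2x1² + 2n1·x2² + 2n2·x3² + 2n3·x4² + (x1+x4)² ≥ 3 for (x1,x2,x3,x4) ≠ 0. -/
lemma one_le_sq_of_ne_zero (x : ℤ) (h : x ≠ 0) : 1 ≤ x ^ 2 := by
  rcases lt_or_gt_of_ne h with h' | h' <;> nlinarith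

theorem stmt_1 (n1 n2 n3 : ℤ) (h1 : 2 ≤ n1) (h2 : 2 ≤ n2) (h3 : 4 ≤ n3)
    (x1 x2 x3 x4 : ℤ) (hx : ¬(x1 = 0 ∧ x2 = 0 ∧ x3 = 0 ∧ x4 = 0)) :
    3 ≤ 3 * x1 ^ 2 + 2 * n1 * x2 ^ 2 + 2 * n2 * x3 ^ 2 + (2 * n3 + 1) * x4 ^ 2
        + 2 * x1 * x4 ∧
    3 ≤ 2 * x1 ^ 2 + 2 * n1 * x2 ^ 2 + 2 * n2 * x3 ^ 2 + 2 * n3 * x4 ^ 2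
        + (x1 + x4) ^ 2 := by
  have key : 3 ≤ 2 * x1 ^ 2 + 2 * n1 * x2 ^ 2 + 2 * n2 * x3 ^ 2 + 2 * n3 * x4 ^ 2
      + (x1 + x4) ^ 2 := by
    by_cases hx2 : x2 = 0
    · by_cases hx3 : x3 = 0
      · by_cases hx4 : x4 = 0
        · have hx1 : x1 ≠ 0 := by tauto
          have := one_le_sq_of_ne_zero x1 hx1
          subst hx2 hx3 hx4
          nlinarith [this]
        · have := one_le_sq_of_ne_zero x4 hx4
          nlinarith [sq_nonneg x1, sq_nonneg x2, sq_nonneg x3, sq_nonneg (x1 + x4),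
            mul_le_mul_of_nonneg_right h3 (sq_nonneg x4)]
      · have := one_le_sq_of_ne_zero x3 hx3
        nlinarith [sq_nonneg x1, sq_nonneg x2, sq_nonneg x4, sq_nonneg (x1 + x4),
          mul_le_mul_of_nonneg_right h2 (sq_nonneg x3),
          mul_le_mul_of_nonneg_right h3 (sq_nonneg x4)]
    · have := one_le_sq_of_ne_zero x2 hx2
      nlinarith [sq_nonneg x1, sq_nonneg x3, sq_nonneg x4, sq_nonneg (x1 + x4),
        mul_le_mul_of_nonneg_right h1 (sq_nonneg x2),
        mul_le_mul_of_nonneg_right h2 (sq_nonneg x3),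
        mul_le_mul_of_nonneg_right h3 (sq_nonneg x4)]
  exact ⟨by linarith [key, sq_nonneg (x1 + x4)], key⟩
end

section
/- Let n1 ≥ 2, n2 ≥ 1 and n3 ≥ 4 be integers. Then for all integers x1, x2, x3, x4, not all zero, the value 3x1² + 2n1·x2² + (2n2+1)x3² + (2n3+1)x4² + 2x1x3 + 2x1x4 is at least 3. -/
theorem stmt_2 (n1 n2 n3 : ℤ) (h1 : 2 ≤ n1) (h2 : 1 ≤ n2) (h3 : 4 ≤ n3)
    (x1 x2 x3 x4 : ℤ) (hx : ¬(x1 = 0 ∧ x2 = 0 ∧ x3 = 0 ∧ x4 = 0)) :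
    3 ≤ 3 * x1 ^ 2 + 2 * n1 * x2 ^ 2 + (2 * n2 + 1) * x3 ^ 2 + (2 * n3 + 1) * x4 ^ 2
        + 2 * x1 * x3 + 2 * x1 * x4 := by
  have sq1 : ∀ x : ℤ, x ≠ 0 → 1 ≤ x ^ 2 := by
    intro x hx0
    have := Int.one_le_abs hx0
    nlinarith [sq_abs x]
  have m1 : 0 ≤ (n1 - 2) * x2 ^ 2 := mul_nonneg (by linarith) (sq_nonneg _)
  have m2 : 0 ≤ (n2 - 1) * x3 ^ 2 := mul_nonneg (by linarith) (sq_nonneg _)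
  have m3 : 0 ≤ (n3 - 4) * x4 ^ 2 := mul_nonneg (by linarith) (sq_nonneg _)
  by_cases e3 : x3 = 0
  · by_cases e4 : x4 = 0
    · subst e3; subst e4
      by_cases e1 : x1 = 0
      · have e2 : x2 ≠ 0 := fun h => hx ⟨e1, h, rfl, rfl⟩
        subst e1
        nlinarith [sq1 x2 e2]
      · nlinarith [sq1 x1 e1, sq_nonneg x2]
    · subst e3
      nlinarith [sq1 x4 e4, sq_nonneg x1, sq_nonneg x2, sq_nonneg x4, sq_nonneg (x1 + x4)]
  · nlinarith [sq1 x3 e3, sq_nonneg x1, sq_nonneg x2, sq_nonneg x3, sq_nonneg x4, sq_nonneg (x1 + x3), sq_nonneg (x1 + x4)]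
end

section
/- Let n1, n2 ≥ 1 and n3, n4 ≥ 4 be integers. For all integers x1,...,x5, not all zero, the value 3x1² + (2n1+1)x2² + (2n2+1)x3² + (2n3+1)x4² + (2n4+1)x5² + 2x1x2 + 2x1x3 + 2x1x4 + 2x1x5 + 2√(n3n4)·x4x5 is not equal to 2, where √(n3n4) denotes the real square root. -/
private lemma one_le_sq {x : ℤ} (h : x ≠ 0) : 1 ≤ x ^ 2 := by
  rcases h.lt_or_gt with h | h <;> nlinarith

private lemma key_int (n1 n2 n3 n4 x1 x2 x3 x4 x5 : ℤ)
    (h1 : 1 ≤ n1) (h2 : 1 ≤ n2) (h3 : 4 ≤ n3) (h4 : 4 ≤ n4)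
    (hx : ¬(x1 = 0 ∧ x2 = 0 ∧ x3 = 0 ∧ x4 = 0 ∧ x5 = 0)) :
    3 ≤ 2*n1*x2^2 + 2*n2*x3^2 + n3*x4^2 + n4*x5^2
        + (x1+x2)^2 + (x1+x3)^2 + (x1+x4)^2 + (x1+x5)^2 - x1^2 := by
  have hn1 : x2^2 ≤ n1 * x2^2 := by nlinarith [sq_nonneg x2]
  have hn2 : x3^2 ≤ n2 * x3^2 := by nlinarith [sq_nonneg x3]
  have hn3 : 4 * x4^2 ≤ n3 * x4^2 := by nlinarith [sq_nonneg x4]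
  have hn4 : 4 * x5^2 ≤ n4 * x5^2 := by nlinarith [sq_nonneg x5]
  by_cases h4' : x4 = 0
  · by_cases h5' : x5 = 0
    · -- x4 = x5 = 0
      subst h4' h5'
      by_cases h2' : x2 = 0
      · by_cases h3' : x3 = 0
        · -- x2 = x3 = 0, so x1 ≠ 0
          have hx1 : x1 ≠ 0 := by
            intro h; exact hx ⟨h, h2', h3', rfl, rfl⟩
          have := one_le_sq hx1
          subst h2' h3'
          nlinarith
        · -- x3 ≠ 0
          have hx3 := one_le_sq h3'
          have hone : 1 ≤ x1^2 + (x1 + x3)^2 := by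
            rcases eq_or_ne x1 0 with h | h
            · subst h; simpa using hx3
            · have := one_le_sq h; nlinarith [sq_nonneg (x1 + x3)]
          nlinarith [sq_nonneg (x1 + x2), sq_nonneg x1]
      · -- x2 ≠ 0
        have hx2 := one_le_sq h2'
        have hone : 1 ≤ x1^2 + (x1 + x2)^2 := by
          rcases eq_or_ne x1 0 with h | h
          · subst h; simpa using hx2
          · have := one_le_sq h; nlinarith [sq_nonneg (x1 + x2)]
        nlinarith [sq_nonneg (x1 + x3), sq_nonneg x1]
    · -- x5 ≠ 0
      have hx5 := one_le_sq h5'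
      nlinarith [sq_nonneg (x1 + 3*x2), sq_nonneg (x1 + 3*x3),
        sq_nonneg (x1 + x4), sq_nonneg (x1 + x5), sq_nonneg x1, sq_nonneg x4]
  · -- x4 ≠ 0
    have hx4 := one_le_sq h4'
    nlinarith [sq_nonneg (x1 + 3*x2), sq_nonneg (x1 + 3*x3),
      sq_nonneg (x1 + x4), sq_nonneg (x1 + x5), sq_nonneg x1, sq_nonneg x5]

theorem stmt_5 (n1 n2 n3 n4 : ℤ) (h1 : 1 ≤ n1) (h2 : 1 ≤ n2) (h3 : 4 ≤ n3) (h4 : 4 ≤ n4)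
    (x1 x2 x3 x4 x5 : ℤ)
    (hx : ¬(x1 = 0 ∧ x2 = 0 ∧ x3 = 0 ∧ x4 = 0 ∧ x5 = 0)) :
    3 * (x1 : ℝ) ^ 2 + (2 * (n1 : ℝ) + 1) * (x2 : ℝ) ^ 2 + (2 * (n2 : ℝ) + 1) * (x3 : ℝ) ^ 2
        + (2 * (n3 : ℝ) + 1) * (x4 : ℝ) ^ 2 + (2 * (n4 : ℝ) + 1) * (x5 : ℝ) ^ 2
        + 2 * (x1 : ℝ) * (x2 : ℝ) + 2 * (x1 : ℝ) * (x3 : ℝ) + 2 * (x1 : ℝ) * (x4 : ℝ)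
        + 2 * (x1 : ℝ) * (x5 : ℝ)
        + 2 * Real.sqrt ((n3 : ℝ) * (n4 : ℝ)) * (x4 : ℝ) * (x5 : ℝ) ≠ 2 := by
  intro heq
  set a : ℝ := Real.sqrt (n3 : ℝ) with ha_def
  set b : ℝ := Real.sqrt (n4 : ℝ) with hb_def
  have hn3 : (0:ℝ) ≤ (n3 : ℝ) := by exact_mod_cast (by linarith : (0:ℤ) ≤ n3)
  have hn4 : (0:ℝ) ≤ (n4 : ℝ) := by exact_mod_cast (by linarith : (0:ℤ) ≤ n4)
  have ha : a ^ 2 = (n3 : ℝ) := Real.sq_sqrt hn3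
  have hb : b ^ 2 = (n4 : ℝ) := Real.sq_sqrt hn4
  have hab : Real.sqrt ((n3 : ℝ) * (n4 : ℝ)) = a * b := Real.sqrt_mul hn3 _
  rw [hab] at heq
  have hI := key_int n1 n2 n3 n4 x1 x2 x3 x4 x5 h1 h2 h3 h4 hx
  have hIr : (3:ℝ) ≤ ((2*n1*x2^2 + 2*n2*x3^2 + n3*x4^2 + n4*x5^2
      + (x1+x2)^2 + (x1+x3)^2 + (x1+x4)^2 + (x1+x5)^2 - x1^2 : ℤ) : ℝ) := by
    exact_mod_cast hI
  have hsum : ((2*n1*x2^2 + 2*n2*x3^2 + n3*x4^2 + n4*x5^2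
      + (x1+x2)^2 + (x1+x3)^2 + (x1+x4)^2 + (x1+x5)^2 - x1^2 : ℤ) : ℝ)
      + (a * (x4:ℝ) + b * (x5:ℝ)) ^ 2 = 2 := by
    push_cast
    linear_combination heq + (x4:ℝ)^2 * ha + (x5:ℝ)^2 * hb
  nlinarith [sq_nonneg (a * (x4:ℝ) + b * (x5:ℝ))]
end
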